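/- arXiv:2604.01146 — 3 statements merged into one kernel-verified Lean document; each statement's English description precedes it below -/
import Mathlib

section
/- Let z ∈ ℤ^d, let h ∈ ℤ^d with X = |h·z| a nonzero integer satisfying X ≤ V, and let p_1 < ⋯ < p_k be distinct primes with p_k ≤ ρ p_1. For each prime p_j define the rank-1 shift set L_j = {i z/p_j mod 1 : i = 0,…,p_j−1}, and let S = Σ_{j=1}^k p_j be the total number of shifts in the union Y = ⋃_j L_j. Then |Σ_{y ∈ Y} exp(2πi h·y)| = Σ_{p_j | X} p_j, and hence |(1/S) Σ_{y ∈ Y} exp(2πi h·y)| ≤ ρ ln(V)/(k ln p_1). -/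
private lemma aux_term_7 (d : ℕ) (z h : Fin d → ℤ) (X : ℤ) (hXdef : X = ∑ j, h j * z j)
    (q : ℕ) (hq : q ≠ 0) (i : ℕ) :
    Complex.exp (2 * Real.pi * Complex.I *
          ∑ jj, (h jj : ℂ) * ((Int.fract ((i : ℝ) * (z jj : ℝ) / (q : ℝ)) : ℝ) : ℂ))
    = Complex.exp (2 * Real.pi * Complex.I * ((i : ℂ) * X / q)) := by
  have hq' : (q : ℂ) ≠ 0 := by exact_mod_cast hq
  set n : ℤ := ∑ jj, h jj * ⌊(i : ℝ) * (z jj : ℝ) / (q : ℝ)⌋ with hn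
  have key : (∑ jj, (h jj : ℂ) * ((Int.fract ((i : ℝ) * (z jj : ℝ) / (q : ℝ)) : ℝ) : ℂ))
      = (i : ℂ) * X / q - (n : ℂ) := by
    have : ∀ jj, ((Int.fract ((i : ℝ) * (z jj : ℝ) / (q : ℝ)) : ℝ) : ℂ)
        = (i : ℂ) * (z jj : ℂ) / (q : ℂ) - ((⌊(i : ℝ) * (z jj : ℝ) / (q : ℝ)⌋ : ℤ) : ℂ) := by
      intro jj
      rw [Int.fract]
      push_cast
      ring
    simp only [this, mul_sub, Finset.sum_sub_distrib]
    rw [hXdef, hn]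
    push_cast
    congr 1
    rw [Finset.mul_sum, Finset.sum_div]
    apply Finset.sum_congr rfl
    intro jj _
    field_simp
  rw [key, mul_sub, Complex.exp_sub]
  have : Complex.exp (2 * ↑Real.pi * Complex.I * (n : ℂ)) = 1 := by
    rw [show 2 * (Real.pi : ℂ) * Complex.I * (n : ℂ) = (n : ℂ) * (2 * Real.pi * Complex.I) by ring]
    exact Complex.exp_int_mul_two_pi_mul_I n
  rw [this, div_one]

private lemma aux_geom_7 (X : ℤ) (q : ℕ) (hq : q ≠ 0) :
    (∑ i ∈ Finset.range q, Complex.exp (2 * Real.pi * Complex.I * ((i : ℂ) * X / q)))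
    = if (q : ℤ) ∣ X then (q : ℂ) else 0 := by
  have hq' : (q : ℂ) ≠ 0 := by exact_mod_cast hq
  have h2 : (2 * (Real.pi : ℂ) * Complex.I) ≠ 0 := by
    simp [Real.pi_ne_zero, Complex.I_ne_zero, Complex.ofReal_ne_zero]
  have hterm : ∀ i : ℕ, Complex.exp (2 * Real.pi * Complex.I * ((i : ℂ) * X / q))
      = Complex.exp (2 * Real.pi * Complex.I * (X / q)) ^ i := by
    intro i
    rw [← Complex.exp_nat_mul]
    congr 1
    ring
  simp only [hterm]
  set ζ := Complex.exp (2 * Real.pi * Complex.I * ((X : ℂ) / q)) with hζ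
  by_cases hdvd : (q : ℤ) ∣ X
  · have hζ1 : ζ = 1 := by
      obtain ⟨c, hc⟩ := hdvd
      rw [hζ, hc]
      push_cast
      rw [mul_comm ((q:ℂ)) ((c:ℂ)), mul_div_assoc, div_self hq', mul_one]
      rw [show 2 * (Real.pi : ℂ) * Complex.I * (c : ℂ) = (c : ℂ) * (2 * Real.pi * Complex.I) by ring]
      exact Complex.exp_int_mul_two_pi_mul_I c
    simp [hζ1, hdvd]
  · have hζ1 : ζ ≠ 1 := by
      intro hone
      rw [hζ, Complex.exp_eq_one_iff] at hone
      obtain ⟨n, hn⟩ := hone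
      apply hdvd
      have hdiv : (X : ℂ) / q = n := by
        have : ((X:ℂ)/q) * (2 * Real.pi * Complex.I) = (n:ℂ) * (2 * Real.pi * Complex.I) := by
          linear_combination hn
        exact mul_right_cancel₀ h2 this
      have hXc : (X : ℂ) = (q : ℂ) * n := by
        rw [div_eq_iff hq'] at hdiv
        rw [hdiv]; ring
      exact ⟨n, by exact_mod_cast hXc⟩
    rw [geom_sum_eq hζ1]
    have hζq : ζ ^ q = 1 := by
      rw [hζ, ← Complex.exp_nat_mul]
      rw [show (q : ℂ) * (2 * Real.pi * Complex.I * ((X:ℂ) / q)) = (X : ℂ) * (2 * Real.pi * Complex.I) by field_simp]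
      exact Complex.exp_int_mul_two_pi_mul_I X
    rw [hζq]
    simp [hdvd]

open Classical in
private lemma aux_bound_7 (k : ℕ) (hk : 0 < k) (X : ℤ) (hX0 : X ≠ 0) (V ρ : ℝ)
    (hXV : |(X : ℝ)| ≤ V)
    (p : Fin k → ℕ) (hp : ∀ j, (p j).Prime) (hmono : StrictMono p)
    (hρ : ∀ j, (p j : ℝ) ≤ ρ * (p ⟨0, hk⟩ : ℝ))
    (S : ℕ) (hS : S = ∑ j, p j) :
    (S:ℝ)⁻¹ * ∑ j ∈ Finset.univ.filter (fun j : Fin k => (p j : ℤ) ∣ X), (p j : ℝ)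
      ≤ ρ * Real.log V / (k * Real.log (p ⟨0, hk⟩)) := by
  set j0 : Fin k := ⟨0, hk⟩ with hj0
  set B := Finset.univ.filter (fun j : Fin k => (p j : ℤ) ∣ X) with hB
  set m := B.card with hm
  have hp0 : 2 ≤ p j0 := (hp j0).two_le
  have hp0pos : (0:ℝ) < (p j0 : ℝ) := by exact_mod_cast Nat.lt_of_lt_of_le Nat.zero_lt_two hp0
  have hple : ∀ j, p j0 ≤ p j := fun j => hmono.monotone (by simp [hj0, Fin.le_def])
  have hprod : (p j0) ^ m ≤ X.natAbs := by
    set Q := B.image p with hQ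
    have hcard : Q.card = m := Finset.card_image_of_injective _ hmono.injective
    have hdvd : (∏ q ∈ Q, q) ∣ X.natAbs := by
      apply Finset.prod_primes_dvd
      · intro q hq
        obtain ⟨j, _, rfl⟩ := Finset.mem_image.mp hq
        exact (hp j).prime
      · intro q hq
        obtain ⟨j, hjB, rfl⟩ := Finset.mem_image.mp hq
        have : (p j : ℤ) ∣ X := (Finset.mem_filter.mp hjB).2
        have h2 := Int.natAbs_dvd_natAbs.mpr this
        simpa using h2
    have hle : (∏ q ∈ Q, q) ≤ X.natAbs :=
      Nat.le_of_dvd (Int.natAbs_pos.mpr hX0) hdvd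
    calc (p j0) ^ m = ∏ _q ∈ Q, p j0 := by rw [Finset.prod_const, hcard]
      _ ≤ ∏ q ∈ Q, q := by
          apply Finset.prod_le_prod'
          intro q hq
          obtain ⟨j, _, rfl⟩ := Finset.mem_image.mp hq
          exact hple j
      _ ≤ X.natAbs := hle
  have hXabs1 : (1:ℝ) ≤ |(X:ℝ)| := by
    rw [← Int.cast_abs]
    exact_mod_cast Int.one_le_abs hX0
  have hlogp0 : 0 < Real.log (p j0) := Real.log_pos (by exact_mod_cast hp0)
  have hmlog : (m:ℝ) * Real.log (p j0) ≤ Real.log V := by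
    have h1 : ((p j0 : ℝ)) ^ m ≤ V := by
      calc ((p j0 : ℝ)) ^ m ≤ (X.natAbs : ℝ) := by exact_mod_cast hprod
        _ = |(X:ℝ)| := by rw [Nat.cast_natAbs]; push_cast; ring
        _ ≤ V := hXV
    calc (m:ℝ) * Real.log (p j0) = Real.log ((p j0 : ℝ) ^ m) := by rw [Real.log_pow]
      _ ≤ Real.log V := Real.log_le_log (by positivity) h1
  have hρ1 : (1:ℝ) ≤ ρ := by
    have := hρ j0
    nlinarith
  have hsumB : (∑ j ∈ B, (p j : ℝ)) ≤ m * (ρ * (p j0 : ℝ)) := by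
    calc (∑ j ∈ B, (p j : ℝ)) ≤ ∑ _j ∈ B, ρ * (p j0 : ℝ) :=
          Finset.sum_le_sum fun j _ => hρ j
      _ = m * (ρ * (p j0 : ℝ)) := by rw [Finset.sum_const, hm, nsmul_eq_mul]
  have hSge : (k:ℝ) * (p j0 : ℝ) ≤ (S:ℝ) := by
    have : k * p j0 ≤ S := by
      rw [hS]
      calc k * p j0 = ∑ _j : Fin k, p j0 := by simp [Finset.sum_const, mul_comm]
        _ ≤ ∑ j, p j := Finset.sum_le_sum fun j _ => hple j
    exact_mod_cast this
  have hkpos : (0:ℝ) < (k:ℝ) := by exact_mod_cast hk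
  have hBnonneg : (0:ℝ) ≤ ∑ j ∈ B, (p j : ℝ) := Finset.sum_nonneg fun j _ => by positivity
  rw [inv_mul_eq_div]
  calc (∑ j ∈ B, (p j : ℝ)) / S ≤ (m * (ρ * (p j0 : ℝ))) / ((k:ℝ) * (p j0 : ℝ)) := by
        apply div_le_div₀ (by positivity) hsumB (by positivity) hSge
    _ = ρ * m / k := by field_simp
    _ ≤ ρ * (Real.log V / Real.log (p j0)) / k := by
        have hρ0 : (0:ℝ) ≤ ρ := by linarith
        have hmle : (m:ℝ) ≤ Real.log V / Real.log (p j0) := (le_div_iff₀ hlogp0).mpr hmlog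
        gcongr
    _ = ρ * Real.log V / (k * Real.log (p j0)) := by ring

open Classical in
/-- Exponential sum over the union of rank-1 shift sets `L_j = {i z/p_j mod 1}` with a common
generator `z`: the sum equals `∑_{p_j ∣ X} p_j` where `X = h·z ≠ 0`, and the averaged sum is
at most `ρ ln V / (k ln p₁)`. -/
theorem stmt_7 (d k : ℕ) (hk : 0 < k) (z h : Fin d → ℤ)
    (X : ℤ) (hXdef : X = ∑ j, h j * z j) (hX0 : X ≠ 0)
    (V ρ : ℝ) (hXV : |(X : ℝ)| ≤ V)
    (p : Fin k → ℕ) (hp : ∀ j, (p j).Prime) (hmono : StrictMono p)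
    (hρ : ∀ j, (p j : ℝ) ≤ ρ * (p ⟨0, hk⟩ : ℝ))
    (S : ℕ) (hS : S = ∑ j, p j) :
    ‖∑ j : Fin k, ∑ i ∈ Finset.range (p j),
        Complex.exp (2 * Real.pi * Complex.I *
          ∑ jj, (h jj : ℂ) * ((Int.fract ((i : ℝ) * (z jj : ℝ) / (p j : ℝ)) : ℝ) : ℂ))‖
      = ∑ j ∈ Finset.univ.filter (fun j : Fin k => (p j : ℤ) ∣ X), (p j : ℝ) ∧
    ‖(S : ℂ)⁻¹ * ∑ j : Fin k, ∑ i ∈ Finset.range (p j),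
        Complex.exp (2 * Real.pi * Complex.I *
          ∑ jj, (h jj : ℂ) * ((Int.fract ((i : ℝ) * (z jj : ℝ) / (p j : ℝ)) : ℝ) : ℂ))‖
      ≤ ρ * Real.log V / (k * Real.log (p ⟨0, hk⟩)) := by
  have hTval : (∑ j : Fin k, ∑ i ∈ Finset.range (p j),
        Complex.exp (2 * Real.pi * Complex.I *
          ∑ jj, (h jj : ℂ) * ((Int.fract ((i : ℝ) * (z jj : ℝ) / (p j : ℝ)) : ℝ) : ℂ)))
      = ((∑ j ∈ Finset.univ.filter (fun j : Fin k => (p j : ℤ) ∣ X), (p j : ℝ) : ℝ) : ℂ) := by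
    have hj : ∀ j : Fin k, (∑ i ∈ Finset.range (p j),
        Complex.exp (2 * Real.pi * Complex.I *
          ∑ jj, (h jj : ℂ) * ((Int.fract ((i : ℝ) * (z jj : ℝ) / (p j : ℝ)) : ℝ) : ℂ)))
        = if (p j : ℤ) ∣ X then ((p j : ℕ) : ℂ) else 0 := by
      intro j
      rw [Finset.sum_congr rfl fun i _ =>
        aux_term_7 d z h X hXdef (p j) (hp j).pos.ne' i]
      exact aux_geom_7 X (p j) (hp j).pos.ne'
    rw [Finset.sum_congr rfl fun j _ => hj j, ← Finset.sum_filter]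
    push_cast
    rfl
  have hnorm : ‖∑ j : Fin k, ∑ i ∈ Finset.range (p j),
        Complex.exp (2 * Real.pi * Complex.I *
          ∑ jj, (h jj : ℂ) * ((Int.fract ((i : ℝ) * (z jj : ℝ) / (p j : ℝ)) : ℝ) : ℂ))‖
      = ∑ j ∈ Finset.univ.filter (fun j : Fin k => (p j : ℤ) ∣ X), (p j : ℝ) := by
    rw [hTval, Complex.norm_real, Real.norm_eq_abs, abs_of_nonneg]
    exact Finset.sum_nonneg fun j _ => by positivity
  refine ⟨hnorm, ?_⟩
  rw [norm_mul, norm_inv, Complex.norm_natCast, hnorm]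
  exact aux_bound_7 k hk X hX0 V ρ hXV p hp hmono hρ S hS
end

section
/- Let H be a finite set of nonzero vectors in ℤ^d. Then there exists a vector z ∈ ℤ^d with max_j |z_j| ≤ ⌈|H|/2⌉ (in fact each component z_j is an integer of absolute value at most ⌈|H_j|/2⌉ where H_j is the set of h ∈ H whose rightmost nonzero entry is in position j) such that h·z ≠ 0 for every h ∈ H. -/
/-- Existence of a component-by-component projection vector `z` with small entries avoiding
all hyperplanes `h·z = 0` for `h` in a finite set of nonzero integer vectors. -/
theorem stmt_8 (d : ℕ) (H : Finset (Fin d → ℤ)) (hH : ∀ h ∈ H, h ≠ 0) :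
    ∃ z : Fin d → ℤ, (∀ j, |z j| ≤ (((H.card + 1) / 2 : ℕ) : ℤ)) ∧
      ∀ h ∈ H, ∑ j, h j * z j ≠ 0 := by
  induction d with
  | zero =>
    exact ⟨0, fun j => j.elim0, fun h hh => absurd (funext fun i => i.elim0) (hH h hh)⟩
  | succ d ih =>
    classical
    set H₀ := H.filter (fun h => h (Fin.last d) = 0) with hH₀
    set G := H₀.image (fun h => fun j : Fin d => h (Fin.castSucc j)) with hGdef
    have hGne : ∀ g ∈ G, g ≠ 0 := by
      intro g hg
      obtain ⟨h, hh, rfl⟩ := Finset.mem_image.mp hg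
      have hh' := Finset.mem_filter.mp hh
      intro h0
      apply hH h hh'.1
      funext i
      refine Fin.lastCases ?_ ?_ i
      · exact hh'.2
      · intro j; exact congrFun h0 j
    obtain ⟨z', hz'b, hz'⟩ := ih G hGne
    set k : ℕ := (H.card + 1) / 2 with hk
    have hGcard : G.card ≤ H.card :=
      le_trans Finset.card_image_le (Finset.card_filter_le _ _)
    have hGk : (((G.card + 1) / 2 : ℕ) : ℤ) ≤ (k : ℤ) := by
      exact_mod_cast Nat.div_le_div_right (by omega)
    set bad : Finset ℤ :=
      H.image (fun h => (-(∑ j : Fin d, h (Fin.castSucc j) * z' j)) / (h (Fin.last d)))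
      with hbad
    set S : Finset ℤ := Finset.Icc (-(k : ℤ)) k with hS
    have hcard : bad.card < S.card := by
      have h1 : bad.card ≤ H.card := Finset.card_image_le
      have h2 : S.card = 2 * k + 1 := by
        rw [hS, Int.card_Icc]; omega
      omega
    have hns : ¬ S ⊆ bad := fun hsub => absurd (Finset.card_le_card hsub) (by omega)
    obtain ⟨t, htS, htbad⟩ := Finset.not_subset.mp hns
    have htabs : |t| ≤ (k : ℤ) := by
      rw [abs_le]; exact Finset.mem_Icc.mp htS
    refine ⟨Fin.snoc z' t, ?_, ?_⟩
    · intro j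
      refine Fin.lastCases ?_ ?_ j
      · rw [Fin.snoc_last]; exact htabs
      · intro i; rw [Fin.snoc_castSucc]; exact le_trans (hz'b i) hGk
    · intro h hh
      rw [Fin.sum_univ_castSucc]
      simp only [Fin.snoc_castSucc, Fin.snoc_last]
      by_cases h0 : h (Fin.last d) = 0
      · rw [h0, zero_mul, add_zero]
        have hmem : (fun j : Fin d => h (Fin.castSucc j)) ∈ G :=
          Finset.mem_image_of_mem _ (Finset.mem_filter.mpr ⟨hh, h0⟩)
        exact hz' _ hmem
      · intro heq
        apply htbad
        rw [hbad]
        refine Finset.mem_image.mpr ⟨h, hh, ?_⟩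
        have hat : h (Fin.last d) * t = -(∑ j : Fin d, h (Fin.castSucc j) * z' j) := by
          linarith
        rw [← hat, Int.mul_ediv_cancel_left _ h0]
end

section
/- Let g̃(z) = Σ_{h ∈ A} ĉ_h exp(2πi h·z), where A ⊂ ℤ^d is symmetric under componentwise sign changes (σ(h) ∈ A whenever h ∈ A and σ ∈ {±1}^d), with A⁺ = A ∩ ℤ_{≥0}^d. Define cosine coefficients c̃_k = 2^{−|k|_0/2} Σ_{h ∈ A, |h| = k} ĉ_h for k ∈ A⁺ (where |h| denotes componentwise absolute value), and f̃(x) = Σ_{k ∈ A⁺} c̃_k φ_k(x) with φ_k(x) = (√2)^{|k|_0} ∏_j cos(π k_j x_j). Then for all z ∈ [0,1]^d, f̃(ψ(z)) = 2^{−d} Σ_{σ ∈ {±1}^d} g̃(σ(z)), where ψ is the componentwise tent map. -/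
open Classical

lemma cos_tent_aux (k : ℤ) {z : ℝ} (_h0 : 0 ≤ z) (_h1 : z ≤ 1) :
    Real.cos (Real.pi * (k : ℝ) * (1 - |2 * z - 1|)) = Real.cos (2 * Real.pi * (k : ℝ) * z) := by
  rcases le_total z (1/2) with h | h
  · rw [abs_of_nonpos (by linarith)]
    ring_nf
  · rw [abs_of_nonneg (by linarith),
      show Real.pi * (k : ℝ) * (1 - (2 * z - 1)) = (k : ℝ) * (2 * Real.pi) - 2 * Real.pi * (k : ℝ) * z by ring,
      Real.cos_int_mul_two_pi_sub]

lemma cos_abs_aux (k : ℤ) (z : ℝ) :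
    Real.cos (2 * Real.pi * ((|k| : ℤ) : ℝ) * z) = Real.cos (2 * Real.pi * (k : ℝ) * z) := by
  rw [Int.cast_abs]
  rcases abs_cases ((k : ℝ)) with ⟨h, _⟩ | ⟨h, _⟩
  · rw [h]
  · rw [h, show 2 * Real.pi * (-(k : ℝ)) * z = -(2 * Real.pi * (k : ℝ) * z) by ring, Real.cos_neg]

lemma sum_sign_exp_aux (d : ℕ) (h : Fin d → ℤ) (z : Fin d → ℝ) :
    ∑ σ : Fin d → ℤˣ, Complex.exp (2 * Real.pi * Complex.I *
        ∑ j, ((h j : ℤ) : ℂ) * ((((σ j : ℤ) : ℝ) * z j : ℝ) : ℂ))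
      = ∏ j, ((2 : ℂ) * (Real.cos (2 * Real.pi * ((h j : ℤ) : ℝ) * z j) : ℂ)) := by
  have key : ∀ σ : Fin d → ℤˣ,
      Complex.exp (2 * Real.pi * Complex.I *
        ∑ j, ((h j : ℤ) : ℂ) * ((((σ j : ℤ) : ℝ) * z j : ℝ) : ℂ))
      = ∏ j, Complex.exp (((2 * Real.pi * ((h j : ℤ) : ℝ) * z j : ℝ) : ℂ) * (((σ j : ℤ) : ℤ) : ℂ) * Complex.I) := by
    intro σ
    rw [Finset.mul_sum, ← Complex.exp_sum]
    congr 1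
    apply Finset.sum_congr rfl
    intro j _
    push_cast
    ring
  rw [Finset.sum_congr rfl fun σ _ => key σ,
    ← Fintype.prod_sum (fun j (u : ℤˣ) => Complex.exp (((2 * Real.pi * ((h j : ℤ) : ℝ) * z j : ℝ) : ℂ) * (((u : ℤ) : ℤ) : ℂ) * Complex.I))]
  apply Finset.prod_congr rfl
  intro j _
  rw [show (Finset.univ : Finset ℤˣ) = {1, -1} by decide]
  rw [Finset.sum_insert (by decide), Finset.sum_singleton]
  rw [Complex.ofReal_cos, Complex.two_cos]
  push_cast
  ring_nf

open Classical in
/-- Projection equivalence: the tent-transformed cosine reconstruction equals the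
sign-average of the Fourier reconstruction, `f̃(ψ(z)) = 2^{-d} ∑_σ g̃(σ(z))`. -/
theorem stmt_15 (d : ℕ) (A : Finset (Fin d → ℤ))
    (hsym : ∀ h ∈ A, ∀ σ : Fin d → ℤˣ, (fun j => (σ j : ℤ) * h j) ∈ A)
    (c : (Fin d → ℤ) → ℂ) (z : Fin d → ℝ) (hz : ∀ j, z j ∈ Set.Icc (0 : ℝ) 1) :
    (∑ k ∈ A.filter fun h => ∀ j, 0 ≤ h j,
        ((1 / (Real.sqrt 2 : ℂ) ^ (Finset.univ.filter fun j => k j ≠ 0).card) *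
          ∑ h ∈ A.filter fun h => (fun j => |h j|) = k, c h) *
        ((Real.sqrt 2 : ℂ) ^ (Finset.univ.filter fun j => k j ≠ 0).card *
          ∏ j, (Real.cos (Real.pi * ((k j : ℤ) : ℝ) * (1 - |2 * z j - 1|)) : ℂ)))
      = ((2 : ℂ) ^ d)⁻¹ * ∑ σ : Fin d → ℤˣ,
          ∑ h ∈ A, c h * Complex.exp (2 * Real.pi * Complex.I *
            ∑ j, ((h j : ℤ) : ℂ) * ((((σ j : ℤ) : ℝ) * z j : ℝ) : ℂ)) := by
  have hs2 : ((Real.sqrt 2 : ℝ) : ℂ) ≠ 0 := by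
    simp only [ne_eq, Complex.ofReal_eq_zero]
    exact (Real.sqrt_pos.mpr (by norm_num)).ne'
  -- transform LHS
  have step1 : (∑ k ∈ A.filter fun h => ∀ j, 0 ≤ h j,
        ((1 / (Real.sqrt 2 : ℂ) ^ (Finset.univ.filter fun j => k j ≠ 0).card) *
          ∑ h ∈ A.filter fun h => (fun j => |h j|) = k, c h) *
        ((Real.sqrt 2 : ℂ) ^ (Finset.univ.filter fun j => k j ≠ 0).card *
          ∏ j, (Real.cos (Real.pi * ((k j : ℤ) : ℝ) * (1 - |2 * z j - 1|)) : ℂ)))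
      = ∑ k ∈ A.filter fun h => ∀ j, 0 ≤ h j,
          ∑ h ∈ A.filter fun h => (fun j => |h j|) = k,
            c h * ∏ j, (Real.cos (2 * Real.pi * ((|h j| : ℤ) : ℝ) * z j) : ℂ) := by
    apply Finset.sum_congr rfl
    intro k _
    have hP : (∏ j, (Real.cos (Real.pi * ((k j : ℤ) : ℝ) * (1 - |2 * z j - 1|)) : ℂ))
        = ∏ j, (Real.cos (2 * Real.pi * ((k j : ℤ) : ℝ) * z j) : ℂ) := by
      apply Finset.prod_congr rfl
      intro j _
      rw [cos_tent_aux (k j) (hz j).1 (hz j).2]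
    rw [hP, mul_mul_mul_comm, one_div, inv_mul_cancel₀ (pow_ne_zero _ hs2), one_mul,
      Finset.sum_mul]
    apply Finset.sum_congr rfl
    intro h hh
    have hk : (fun j => |h j|) = k := (Finset.mem_filter.mp hh).2
    rw [← hk]
  rw [step1]
  -- fiberwise collapse of LHS
  have step2 : (∑ k ∈ A.filter fun h => ∀ j, 0 ≤ h j,
          ∑ h ∈ A.filter fun h => (fun j => |h j|) = k,
            c h * ∏ j, (Real.cos (2 * Real.pi * ((|h j| : ℤ) : ℝ) * z j) : ℂ))
      = ∑ h ∈ A, c h * ∏ j, (Real.cos (2 * Real.pi * ((|h j| : ℤ) : ℝ) * z j) : ℂ) := by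
    apply Finset.sum_fiberwise_of_maps_to
    intro h hh
    rw [Finset.mem_filter]
    refine ⟨?_, fun j => abs_nonneg _⟩
    have := hsym h hh (fun j => if 0 ≤ h j then 1 else -1)
    convert this using 2 with j
    split_ifs with hj
    · simp [abs_of_nonneg hj]
    · simp [abs_of_neg (lt_of_not_ge hj)]
  rw [step2]
  -- transform RHS
  rw [Finset.sum_comm]
  rw [Finset.mul_sum]
  apply Finset.sum_congr rfl
  intro h _
  rw [← Finset.mul_sum, sum_sign_exp_aux, Finset.prod_mul_distrib, Finset.prod_const,
    Finset.card_univ, Fintype.card_fin]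
  rw [show ((2:ℂ)^d)⁻¹ * (c h * ((2:ℂ)^d * ∏ j, (Real.cos (2 * Real.pi * ((h j : ℤ) : ℝ) * z j) : ℂ)))
      = (((2:ℂ)^d)⁻¹ * (2:ℂ)^d) * (c h * ∏ j, (Real.cos (2 * Real.pi * ((h j : ℤ) : ℝ) * z j) : ℂ)) by ring,
    inv_mul_cancel₀ (by norm_num : ((2:ℂ)^d) ≠ 0), one_mul]
  congr 1
  apply Finset.prod_congr rfl
  intro j _
  rw [cos_abs_aux]
end
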